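/- Let n ∈ ℕ, a ∈ C¹([0,1]) with a > 0, and f ∈ C¹([0,∞)) satisfy (f_eq) and (f_sgn). Then there exists d* > u0 such that the angular variable of the solution u_{d*} satisfies θ_{d*}(1) − θ_{d*}(0) < π. -/

import Mathlib

/-!
For large `d` the solution starts far above `u0`. Once `θ` reaches `π` there is a point `x` with
`u x ≤ u0` and `φₙ(u' x) = 0`; by the mean value theorem `u' ξ ≤ u0 - d` at some `ξ < x`, so
`v = φₙ(u')` is very negative at `ξ`, since `φₙ` is affine, hence unbounded below, off `[-n, n]`.
But `v' = -a f̂(u)` is bounded above independently of `d` (`f̂` is bounded below because `f > 0`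
beyond `u0`), so `v` cannot climb back to `0` within `[0, 1]`.
-/

open Set MeasureTheory Filter Topology

noncomputable section

/-- `φ(s) = s / √(1+s²)`. -/
def phi (s : ℝ) : ℝ := s / Real.sqrt (1 + s ^ 2)

/-- `φ'(s) = (1+s²)^(-3/2)`. -/
def phiD (s : ℝ) : ℝ := 1 / (Real.sqrt (1 + s ^ 2)) ^ 3

/-- the inverse of `φ`, a bijection of `(-1,1)` onto `ℝ`. -/
def phiInv (y : ℝ) : ℝ := y / Real.sqrt (1 - y ^ 2)

/-- the approximation `φₙ`: equal to `φ` on `[-n,n]`, affine outside. -/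
def phiN (n : ℕ) (s : ℝ) : ℝ :=
  if (n : ℝ) < s then phi n + phiD n * (s - n)
  else if s < -(n : ℝ) then -phi n + phiD n * (s + n)
  else phi s

/-- `Φ(s) = √(1+s²) - 1`. -/
def PhiBig (s : ℝ) : ℝ := Real.sqrt (1 + s ^ 2) - 1

/-- `Φₙ(s) = ∫₀ˢ φₙ`. -/
def PhiNBig (n : ℕ) (s : ℝ) : ℝ := ∫ t in (0:ℝ)..s, phiN n t

/-- the extension `f̂` of `f` vanishing on the negatives. -/
def fhat (f : ℝ → ℝ) (s : ℝ) : ℝ := if s < 0 then 0 else f s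

/-- `F(s) = ∫_{u0}^s f`. -/
def Fprim (f : ℝ → ℝ) (u0 s : ℝ) : ℝ := ∫ t in u0..s, f t

/-- assumption `(f_eq)`. -/
def Feq (f : ℝ → ℝ) (u0 : ℝ) : Prop := f 0 = 0 ∧ f u0 = 0

/-- assumption `(f_sgn)`. -/
def Fsgn (f : ℝ → ℝ) (u0 : ℝ) : Prop :=
  (∀ s, 0 < s → s < u0 → f s < 0) ∧ (∀ s, u0 < s → 0 < f s)

/-- the constant `C_a`. -/
def Ca (a : ℝ → ℝ) : ℝ :=
  max ((a 1 / a 0) * Real.exp (∫ x in (0:ℝ)..1, max (-deriv a x) 0 / a x))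
      ((a 0 / a 1) * Real.exp (∫ x in (0:ℝ)..1, max (deriv a x) 0 / a x))

/-- assumption `(f_ap)`, with the value `ū` made explicit. -/
def Fap (a f : ℝ → ℝ) (u0 ubar : ℝ) : Prop :=
  u0 < ubar ∧ (∫ s in u0..ubar, f s) = Ca a * ∫ s in u0..(0:ℝ), f s

/-- assumption `(f_ap)'`. -/
def Fap' (a f : ℝ → ℝ) : Prop :=
  (∫ x in (0:ℝ)..1, a x) * sSup ((fun s => max (-f s) 0) '' Ici 0) < 1

/-- classical solution of the approximated Neumann problem `(Pₙ)`. -/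
def IsPnSol (a f : ℝ → ℝ) (n : ℕ) (u : ℝ → ℝ) : Prop :=
  ContDiff ℝ 2 u ∧ (∀ x ∈ Ioo (0:ℝ) 1, 0 < u x) ∧
  deriv u 0 = 0 ∧ deriv u 1 = 0 ∧
  ∀ x ∈ Ioo (0:ℝ) 1, -deriv (fun y => phiN n (deriv u y)) x = a x * f (u x)

/-- classical solution of the prescribed mean curvature Neumann problem `(P)`. -/
def IsPSol (a f : ℝ → ℝ) (u : ℝ → ℝ) : Prop :=
  ContDiff ℝ 2 u ∧ (∀ x ∈ Ioo (0:ℝ) 1, 0 < u x) ∧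
  deriv u 0 = 0 ∧ deriv u 1 = 0 ∧
  ∀ x ∈ Ioo (0:ℝ) 1, -deriv (fun y => phi (deriv u y)) x = a x * f (u x)

/-- solution of the Cauchy problem with initial datum `d`. -/
def IsCauchySol (a f : ℝ → ℝ) (n : ℕ) (d : ℝ) (u : ℝ → ℝ) : Prop :=
  ContDiff ℝ 2 u ∧ u 0 = d ∧ deriv u 0 = 0 ∧
  ∀ x ∈ Ioo (0:ℝ) 1, -deriv (fun y => phiN n (deriv u y)) x = a x * fhat f (u x)

/-- `θ` is a (clockwise) angular variable for `(u - u0, φₙ(u'))` around `(u0,0)`. -/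
def IsAngle (n : ℕ) (u0 : ℝ) (u θ : ℝ → ℝ) : Prop :=
  ContinuousOn θ (Icc 0 1) ∧
  ∀ x ∈ Icc (0:ℝ) 1,
    u x - u0 = Real.sqrt ((u x - u0) ^ 2 + phiN n (deriv u x) ^ 2) * Real.cos (θ x) ∧
    phiN n (deriv u x) = -(Real.sqrt ((u x - u0) ^ 2 + phiN n (deriv u x) ^ 2) * Real.sin (θ x))

/-- non-constant on `(0,1)`. -/
def Nonconstant (u : ℝ → ℝ) : Prop := ∃ x ∈ Ioo (0:ℝ) 1, ∃ y ∈ Ioo (0:ℝ) 1, u x ≠ u y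

/-- the set of points of `(0,1)` where `u` takes the value `u0`. -/
def zeroSet (u : ℝ → ℝ) (u0 : ℝ) : Set ℝ := {x | x ∈ Ioo (0:ℝ) 1 ∧ u x = u0}

/-- the hypothesis `f'(u0) > λ_{k+1}`: there is `λ̄ < f'(u0)` admitting a nontrivial Neumann
eigenfunction of `-w'' = λ̄ a w` with exactly `k` zeros in `(0,1)`. -/
def EigenHyp (a f : ℝ → ℝ) (u0 : ℝ) (k : ℕ) : Prop :=
  ∃ lam : ℝ, ∃ w : ℝ → ℝ, lam < deriv f u0 ∧ ContDiff ℝ 2 w ∧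
    (∃ x ∈ Icc (0:ℝ) 1, w x ≠ 0) ∧
    (∀ x ∈ Ioo (0:ℝ) 1, -deriv (deriv w) x = lam * a x * w x) ∧
    deriv w 0 = 0 ∧ deriv w 1 = 0 ∧ (zeroSet w 0).ncard = k

/-- the functional `J(v) = ∫₀¹ √(1+|Dv|²)`. -/
def Jfun (v : ℝ → ℝ) : ℝ :=
  sSup { r : ℝ | ∃ w₁ w₂ : ℝ → ℝ, ContDiff ℝ 1 w₁ ∧ ContDiff ℝ 1 w₂ ∧
    tsupport w₁ ⊆ Ioo 0 1 ∧ tsupport w₂ ⊆ Ioo 0 1 ∧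
    (∀ x, w₁ x ^ 2 + w₂ x ^ 2 ≤ 1) ∧
    r = ∫ x in Ioo (0:ℝ) 1, (v x * deriv w₁ x + w₂ x) }

/-- BV-solution of the Neumann problem `(P)`. -/
def IsBVSol (a f : ℝ → ℝ) (u : ℝ → ℝ) : Prop :=
  BoundedVariationOn u (Ioo 0 1) ∧ (∀ x ∈ Ioo (0:ℝ) 1, 0 ≤ u x) ∧
  ∀ v : ℝ → ℝ, BoundedVariationOn v (Ioo 0 1) →
    Jfun u + ∫ x in Ioo (0:ℝ) 1, a x * f (u x) * (v x - u x) ≤ Jfun v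

/-- `u - u0` changes sign at `z`. -/
def ChangesSign (u : ℝ → ℝ) (u0 z : ℝ) : Prop :=
  ∃ δ > (0:ℝ), ((∀ x ∈ Ioo (z - δ) z, u x < u0) ∧ (∀ x ∈ Ioo z (z + δ), u0 < u x)) ∨
           ((∀ x ∈ Ioo (z - δ) z, u0 < u x) ∧ (∀ x ∈ Ioo z (z + δ), u x < u0))

/-- the energy `Eₙ` along a solution of `(Pₙ)`. -/
def EnergyN (a f : ℝ → ℝ) (u0 : ℝ) (n : ℕ) (u : ℝ → ℝ) (x : ℝ) : ℝ :=
  deriv u x * phiN n (deriv u x) - PhiNBig n (deriv u x) + a x * Fprim f u0 (u x)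

/-- the energy `ℰ` of `u` extends to a continuous function on `[0,1]`. -/
def HasContinuousEnergy (a f : ℝ → ℝ) (u0 : ℝ) (u : ℝ → ℝ) : Prop :=
  ∃ E : ℝ → ℝ, ContinuousOn E (Icc 0 1) ∧
    ∀ x ∈ Ioo (0:ℝ) 1, ContinuousAt u x →
      (DifferentiableAt ℝ u x →
        E x = 1 - 1 / Real.sqrt (1 + deriv u x ^ 2) + a x * Fprim f u0 (u x)) ∧
      (¬ DifferentiableAt ℝ u x → E x = 1 + a x * Fprim f u0 (u x))

/-- the oscillatory structure of the BV-solutions of Theorem 1.1: `m` generalized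
intersections with `u0`, with starting sign `σ` (`σ = 1` for case (I), `σ = -1` for case (II)). -/
def OscStructure (u0 : ℝ) (u : ℝ → ℝ) (m : ℕ) (σ : ℝ) : Prop :=
  ∃ x : ℕ → ℝ,
    x 0 = 0 ∧ x (m + 1) = 1 ∧ (∀ i ≤ m, x i < x (i + 1)) ∧
    ContDiffOn ℝ 2 u (Ico 0 (x 1)) ∧ ContDiffOn ℝ 2 u (Ioc (x m) 1) ∧
    (∀ i, 1 ≤ i → i + 1 ≤ m → ContDiffOn ℝ 2 u (Ioo (x i) (x (i + 1)))) ∧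
    derivWithin u (Icc 0 1) 0 = 0 ∧ derivWithin u (Icc 0 1) 1 = 0 ∧
    (∀ i ≤ m, ∀ y ∈ Ioo (x i) (x (i + 1)), 0 < σ * (-1 : ℝ) ^ (i + 1) * (u y - u0)) ∧
    ∀ i, 1 ≤ i → i ≤ m →
      (u (x i) = u0 ∧ ContDiffOn ℝ 2 u (Ioo (x (i - 1)) (x (i + 1)))) ∨
      (∃ L R : ℝ, Tendsto u (𝓝[<] x i) (𝓝 L) ∧ Tendsto u (𝓝[>] x i) (𝓝 R) ∧
        (0 < σ * (-1 : ℝ) ^ (i + 1) →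
          L ≤ u0 ∧ u0 ≤ R ∧ Tendsto (deriv u) (𝓝[<] x i) atTop ∧
            Tendsto (deriv u) (𝓝[>] x i) atTop) ∧
        (σ * (-1 : ℝ) ^ (i + 1) < 0 →
          R ≤ u0 ∧ u0 ≤ L ∧ Tendsto (deriv u) (𝓝[<] x i) atBot ∧
            Tendsto (deriv u) (𝓝[>] x i) atBot))

open Real

lemma phiD_pos (s : ℝ) : 0 < phiD s := by
  have : 0 < √(1 + s ^ 2) := sqrt_pos.mpr (by positivity)
  unfold phiD; positivity

lemma phiD_neg (s : ℝ) : phiD (-s) = phiD s := by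
  simp only [phiD, neg_sq]

lemma phi_neg (s : ℝ) : phi (-s) = -phi s := by
  simp only [phi, neg_sq, neg_div]

lemma phi_hasDerivAt (s : ℝ) : HasDerivAt phi (phiD s) s := by
  have h0 : (0 : ℝ) < 1 + s ^ 2 := by positivity
  have hsq : √(1 + s ^ 2) ^ 2 = 1 + s ^ 2 := sq_sqrt h0.le
  have hsqrt : HasDerivAt (fun t : ℝ => √(1 + t ^ 2)) (1 / (2 * √(1 + s ^ 2)) * (2 * s)) s :=
    (hasDerivAt_sqrt h0.ne').comp s (by simpa using (hasDerivAt_pow 2 s).const_add 1)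
  refine ((hasDerivAt_id s).div hsqrt (sqrt_pos.mpr h0).ne').congr_deriv ?_
  have : √(1 + s ^ 2) ≠ 0 := (sqrt_pos.mpr h0).ne'
  simp only [phiD, id_eq]
  field_simp
  linear_combination hsq

lemma phiN_of_lt {n : ℕ} {s : ℝ} (h : (n : ℝ) < s) : phiN n s = phi n + phiD n * (s - n) :=
  if_pos h

lemma phiN_of_lt_neg {n : ℕ} {s : ℝ} (h : s < -(n : ℝ)) :
    phiN n s = -phi n + phiD n * (s + n) := by
  have : ¬ (n : ℝ) < s := by linarith [(n.cast_nonneg : (0 : ℝ) ≤ n)]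
  rw [phiN, if_neg this, if_pos h]

lemma phiN_of_mem_Icc {n : ℕ} {s : ℝ} (h : s ∈ Icc (-(n : ℝ)) n) : phiN n s = phi s := by
  rw [phiN, if_neg (not_lt.mpr h.2), if_neg (not_lt.mpr h.1)]

lemma phiN_zero : phiN 0 = id := by
  ext s
  rcases lt_trichotomy s 0 with h | rfl | h
  · simp [phiN_of_lt_neg (n := 0) (by simpa using h), phi, phiD]
  · simp [phiN, phi]
  · simp [phiN_of_lt (n := 0) (by simpa using h), phi, phiD]

lemma hasDerivAt_of_nhdsLE_nhdsGE {f g h : ℝ → ℝ} {b D : ℝ} (hg : HasDerivAt g D b)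
    (hh : HasDerivAt h D b) (hfg : f =ᶠ[𝓝[≤] b] g) (hfh : f =ᶠ[𝓝[≥] b] h) :
    HasDerivAt f D b := by
  have := (hg.hasDerivWithinAt.congr_of_eventuallyEq hfg
    (hfg.eq_of_nhdsWithin (mem_Iic.2 le_rfl))).union (hh.hasDerivWithinAt.congr_of_eventuallyEq hfh
    (hfh.eq_of_nhdsWithin (mem_Ici.2 le_rfl)))
  rwa [Iic_union_Ici, hasDerivWithinAt_univ] at this

lemma hasDerivAt_const_add_mul_sub (c m b s : ℝ) : HasDerivAt (fun t => c + m * (t - b)) m s := by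
  simpa using (((hasDerivAt_id s).sub_const b).const_mul m).const_add c

lemma phiN_hasDerivAt (n : ℕ) (s : ℝ) :
    HasDerivAt (phiN n) (phiD (max (-(n : ℝ)) (min s n))) s := by
  rcases n.eq_zero_or_pos with rfl | hn
  · simpa [phiN_zero, phiD] using hasDerivAt_id s
  have hnn : -(n : ℝ) < n := by
    have : (0 : ℝ) < n := by exact_mod_cast hn
    linarith
  have hL : ∀ t, HasDerivAt (fun t => -phi n + phiD n * (t + n)) (phiD n) t := fun t => by
    simpa using hasDerivAt_const_add_mul_sub (-phi n) (phiD n) (-n) t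
  have hR : ∀ t, HasDerivAt (fun t => phi n + phiD n * (t - n)) (phiD n) t :=
    hasDerivAt_const_add_mul_sub (phi n) (phiD n) n
  rcases lt_trichotomy s (-n) with h | rfl | h
  · rw [min_eq_left (by linarith), max_eq_left h.le, phiD_neg]
    exact (hL s).congr_of_eventuallyEq
      (eventually_of_mem (Iio_mem_nhds h) fun t ht => phiN_of_lt_neg ht)
  · rw [min_eq_left hnn.le, max_eq_left le_rfl]
    refine hasDerivAt_of_nhdsLE_nhdsGE ((hL _).congr_deriv (phiD_neg _).symm) (phi_hasDerivAt _)
      ?_ ?_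
    · filter_upwards [self_mem_nhdsWithin] with t ht
      rcases (mem_Iic.mp ht).lt_or_eq with ht | rfl
      · exact phiN_of_lt_neg ht
      · rw [phiN_of_mem_Icc ⟨le_rfl, hnn.le⟩, phi_neg]; ring
    · filter_upwards [Ico_mem_nhdsGE hnn] with t ht using phiN_of_mem_Icc ⟨ht.1, ht.2.le⟩
  rcases lt_trichotomy s n with h' | rfl | h'
  · rw [min_eq_left h'.le, max_eq_right h.le]
    exact (phi_hasDerivAt s).congr_of_eventuallyEq
      (eventually_of_mem (Ioo_mem_nhds h h') fun t ht => phiN_of_mem_Icc ⟨ht.1.le, ht.2.le⟩)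
  · rw [min_eq_left le_rfl, max_eq_right hnn.le]
    refine hasDerivAt_of_nhdsLE_nhdsGE (phi_hasDerivAt _) (hR _) ?_ ?_
    · filter_upwards [Ioc_mem_nhdsLE hnn] with t ht using phiN_of_mem_Icc ⟨ht.1.le, ht.2⟩
    · filter_upwards [self_mem_nhdsWithin] with t ht
      rcases (mem_Ici.mp ht).lt_or_eq with ht | rfl
      · exact phiN_of_lt ht
      · rw [phiN_of_mem_Icc ⟨hnn.le, le_rfl⟩]; ring
  · rw [min_eq_right h'.le, max_eq_right hnn.le]
    exact (hR s).congr_of_eventuallyEq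
      (eventually_of_mem (Ioi_mem_nhds h') fun t ht => phiN_of_lt ht)

lemma phiN_strictMono (n : ℕ) : StrictMono (phiN n) :=
  strictMono_of_deriv_pos fun s => (phiN_hasDerivAt n s).deriv ▸ phiD_pos _

lemma phiN_differentiable (n : ℕ) : Differentiable ℝ (phiN n) :=
  fun s => (phiN_hasDerivAt n s).differentiableAt

lemma tendsto_phiN_atBot (n : ℕ) : Tendsto (phiN n) atBot atBot := by
  have : Tendsto (fun s => -phi n + phiD n * (s + n)) atBot atBot :=
    tendsto_atBot_add_const_left _ _
      ((tendsto_atBot_add_const_right _ _ tendsto_id).const_mul_atBot (phiD_pos n))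
  exact this.congr'
    (eventually_of_mem (Iio_mem_atBot (-(n : ℝ))) fun s hs => (phiN_of_lt_neg hs).symm)

lemma IsAngle.exists_le_of_pi_mem {n : ℕ} {u0 : ℝ} {u θ : ℝ → ℝ} (hθ : IsAngle n u0 u θ)
    (hπ : π ∈ Icc (θ 0) (θ 1)) : ∃ x ∈ Icc (0 : ℝ) 1, u x ≤ u0 ∧ phiN n (deriv u x) = 0 := by
  obtain ⟨x, hx, hθx⟩ := intermediate_value_Icc zero_le_one hθ.1 hπ
  obtain ⟨hcos, hsin⟩ := hθ.2 x hx
  rw [hθx, cos_pi] at hcos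
  rw [hθx, sin_pi] at hsin
  exact ⟨x, hx, by linarith [sqrt_nonneg ((u x - u0) ^ 2 + phiN n (deriv u x) ^ 2)],
    by simpa using hsin⟩

lemma exists_forall_neg_fhat_le {f : ℝ → ℝ} {u0 : ℝ} (hf : ContinuousOn f (Ici 0))
    (hfpos : ∀ s, u0 < s → 0 < f s) : ∃ M, 0 ≤ M ∧ ∀ s, -fhat f s ≤ M := by
  obtain ⟨C, hC⟩ := isCompact_Icc.exists_bound_of_continuousOn
    (hf.mono (Icc_subset_Ici_self : Icc 0 u0 ⊆ Ici 0))
  refine ⟨max C 0, le_max_right _ _, fun s => ?_⟩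
  unfold fhat
  split_ifs with hs
  · simp
  rcases le_or_gt s u0 with hsu | hsu
  · exact le_max_of_le_left ((neg_le_abs _).trans (hC s ⟨not_lt.mp hs, hsu⟩))
  · linarith [hfpos s hsu, le_max_right C 0]

lemma exists_forall_neg_mul_fhat_le {a f : ℝ → ℝ} {u0 : ℝ} (ha : ContinuousOn a (Icc 0 1))
    (ha₀ : ∀ x ∈ Icc (0 : ℝ) 1, 0 ≤ a x) (hf : ContinuousOn f (Ici 0))
    (hfpos : ∀ s, u0 < s → 0 < f s) :
    ∃ B, 0 ≤ B ∧ ∀ x ∈ Icc (0 : ℝ) 1, ∀ s, -(a x * fhat f s) ≤ B := by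
  obtain ⟨A, hA⟩ := isCompact_Icc.exists_bound_of_continuousOn ha
  obtain ⟨M, hM₀, hM⟩ := exists_forall_neg_fhat_le hf hfpos
  have hA₀ : 0 ≤ A := (norm_nonneg _).trans (hA 0 ⟨le_rfl, zero_le_one⟩)
  refine ⟨A * M, mul_nonneg hA₀ hM₀, fun x hx s => ?_⟩
  calc -(a x * fhat f s) = a x * -fhat f s := by ring
    _ ≤ a x * M := mul_le_mul_of_nonneg_left (hM s) (ha₀ x hx)
    _ ≤ A * M := mul_le_mul_of_nonneg_right ((le_abs_self _).trans (hA x hx)) hM₀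

lemma exists_deriv_le_of_sub_le {u : ℝ → ℝ} (hu : Differentiable ℝ u) {x s : ℝ} (hx : 0 < x)
    (hx₁ : x ≤ 1) (hs : s ≤ 0) (hux : u x - u 0 ≤ s) : ∃ ξ ∈ Ioo 0 x, deriv u ξ ≤ s := by
  obtain ⟨ξ, hξ, hξd⟩ := exists_deriv_eq_slope u hx hu.continuous.continuousOn hu.differentiableOn
  refine ⟨ξ, hξ, ?_⟩
  rw [hξd, sub_zero, div_le_iff₀ hx]
  nlinarith

theorem statement7_general (n : ℕ) (a f : ℝ → ℝ) (u0 : ℝ)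
    (ha : ContDiff ℝ 1 a) (hapos : ∀ x ∈ Icc (0:ℝ) 1, 0 < a x)
    (hf : ContDiffOn ℝ 1 f (Ici 0))
    (hfsgn : Fsgn f u0) :
    ∃ d : ℝ, u0 < d ∧ ∀ u θ : ℝ → ℝ, IsCauchySol a f n d u → IsAngle n u0 u θ →
      θ 0 = 0 → θ 1 - θ 0 < Real.pi := by
  obtain ⟨B, hB₀, hB⟩ := exists_forall_neg_mul_fhat_le ha.continuous.continuousOn
    (fun x hx => (hapos x hx).le) hf.continuousOn hfsgn.2
  obtain ⟨s, hsB, hs₀⟩ := (((tendsto_phiN_atBot n).eventually (eventually_lt_atBot (-B))).and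
    (eventually_lt_atBot 0)).exists
  refine ⟨u0 - s, by linarith, fun u θ hu hθ hθ0 => ?_⟩
  by_contra! hπ
  obtain ⟨x, hx, hux, hvx⟩ := hθ.exists_le_of_pi_mem ⟨by rw [hθ0]; exact pi_pos.le, by linarith⟩
  have hx_pos : 0 < x := hx.1.lt_of_ne (by rintro rfl; linarith [hu.2.1])
  obtain ⟨ξ, hξ, hξs⟩ := exists_deriv_le_of_sub_le (hu.1.differentiable (by norm_num)) hx_pos hx.2
    hs₀.le (by linarith [hu.2.1])
  set v := fun y => phiN n (deriv u y)
  have hv : Differentiable ℝ v := (phiN_differentiable n).comp hu.1.differentiable_deriv_two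
  have hv' : ∀ y ∈ interior (Icc (0 : ℝ) 1), deriv v y ≤ B := fun y hy => by
    rw [interior_Icc] at hy
    linarith [hu.2.2.2 y hy, hB y (Ioo_subset_Icc_self hy) (u y)]
  have hvξ : v ξ < -B := ((phiN_strictMono n).monotone hξs).trans_lt hsB
  have := (convex_Icc 0 1).image_sub_le_mul_sub_of_deriv_le hv.continuous.continuousOn
    hv.differentiableOn hv' ξ ⟨hξ.1.le, hξ.2.le.trans hx.2⟩ x hx hξ.2.le
  have : B * (x - ξ) ≤ B := mul_le_of_le_one_right hB₀ (by linarith [hξ.1, hx.2])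
  linarith

theorem statement7 (n : ℕ) (a f : ℝ → ℝ) (u0 : ℝ)
    (ha : ContDiff ℝ 1 a) (hapos : ∀ x ∈ Icc (0:ℝ) 1, 0 < a x)
    (hf : ContDiffOn ℝ 1 f (Ici 0)) (hu0 : 0 < u0)
    (hfeq : Feq f u0) (hfsgn : Fsgn f u0) :
    ∃ d : ℝ, u0 < d ∧ ∀ u θ : ℝ → ℝ, IsCauchySol a f n d u → IsAngle n u0 u θ →
      θ 0 = 0 → θ 1 - θ 0 < Real.pi :=
  statement7_general n a f u0 ha hapos hf hfsgn
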